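/- Let ω be irrational with the G-property and satisfying the Diophantine condition of order ν, and let u(t) = h(ωt, t) where h : ℝ² → E is 1-periodic in each variable and satisfies the Hölder conditions |h(t₁,s) − h(t₂,s)| ≤ C_h|t₁ − t₂|^{α₁} and |h(t,s₁) − h(t,s₂)| ≤ C_h|s₁ − s₂|^{α₂} (for arguments at distance ≤ ε₀), with α = max{α₁, α₂}. Then there is a constant K > 0 such that for all sufficiently small ε > 0 the minimal inclusion length satisfies l_u(ε) ≤ K(1/ε)^{(1+ν)/α}; in particular 𝔇𝔦(u) ≤ (1+ν)/α. -/

import Mathlib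

/-!
If `‖n ω‖ ≤ δ` for an integer `n`, where `‖·‖` is the distance to the nearest integer, then `n`
is a `Ch δ^α₁`-almost period of `u`, by periodicity of `h` and Hölder continuity in its first
variable. For `ω` Diophantine of order `ν`, the least `q₁` with `‖q₁ ω‖ < δ` and the least
`q₂` with `‖q₂ ω‖ < ‖q₁ ω‖` approximate `ω` from opposite sides, and `q₁ + q₂ = O(δ^{-(1+ν)})`
because `q₂ ≤ 1 / ‖q₁ ω‖ ≤ q₁^{1+ν} / C`. Stepping by `-q₁` and `+q₂`, every window of `q₁ + q₂`
consecutive integers contains such an `n`; with `δ = (ε / Ch)^{1/α₁}` this gives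
`l_u(ε) = O(ε^{-(1+ν)/α₁})`. The exponent `α₂` is handled by exchanging the variables of `h`:
`s ↦ u (s / ω)` is quasiperiodic with frequency `1 / ω`, again Diophantine of order `ν`.
-/

/-- `τ` is an `ε`-almost period of `u`. -/
def IsAlmostPeriod {E : Type*} [NormedAddCommGroup E] (u : ℝ → E) (ε τ : ℝ) : Prop :=
  ∀ t : ℝ, ‖u (t + τ) - u t‖ ≤ ε

/-- `L` is an inclusion length for `ε`-almost periods of `u`. -/
def IsInclusionLength {E : Type*} [NormedAddCommGroup E] (u : ℝ → E) (ε L : ℝ) : Prop :=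
  0 < L ∧ ∀ a : ℝ, ∃ τ ∈ Set.Icc a (a + L), IsAlmostPeriod u ε τ

/-- The minimal inclusion length `l_u(ε)` for `ε`-almost periods of `u`. -/
noncomputable def inclusionLength {E : Type*} [NormedAddCommGroup E] (u : ℝ → E) (ε : ℝ) : ℝ :=
  sInf {L | IsInclusionLength u ε L}

/-- `u` is uniformly almost periodic. -/
def AlmostPeriodic {E : Type*} [NormedAddCommGroup E] (u : ℝ → E) : Prop :=
  Continuous u ∧ ∀ ε > 0, ∃ L, IsInclusionLength u ε L

/-- The Diophantine dimension `𝔇𝔦(u) = limsup_{ε→0+} ln l_u(ε)/ln(1/ε)`. -/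
noncomputable def diophDim {E : Type*} [NormedAddCommGroup E] (u : ℝ → E) : ℝ :=
  Filter.limsup (fun ε : ℝ => Real.log (inclusionLength u ε) / Real.log (1 / ε)) (nhdsWithin 0 (Set.Ioi 0))

/-- The lower Diophantine dimension `𝔡𝔦(u) = liminf_{ε→0+} ln l_u(ε)/ln(1/ε)`. -/
noncomputable def lowerDiophDim {E : Type*} [NormedAddCommGroup E] (u : ℝ → E) : ℝ :=
  Filter.liminf (fun ε : ℝ => Real.log (inclusionLength u ε) / Real.log (1 / ε)) (nhdsWithin 0 (Set.Ioi 0))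

/-- The Gauss map `G(x) = 1/x − ⌊1/x⌋`. -/
noncomputable def gaussMap (x : ℝ) : ℝ := 1 / x - ⌊(1 / x : ℝ)⌋

/-- The Gauss iterates `ω_k` of `ω`: `ω₀ = ω − ⌊ω⌋`, `ω_{k+1} = G(ω_k)`. -/
noncomputable def cfOmega (ω : ℝ) : ℕ → ℝ
  | 0 => ω - ⌊ω⌋
  | k + 1 => gaussMap (cfOmega ω k)

/-- The partial quotients `a_k` of the continued fraction of `ω`. -/
noncomputable def cfA (ω : ℝ) : ℕ → ℤ
  | 0 => ⌊ω⌋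
  | k + 1 => ⌊(1 / cfOmega ω k : ℝ)⌋

/-- The numerators `p_k` of the convergents of `ω`. -/
noncomputable def cfP (ω : ℝ) : ℕ → ℤ
  | 0 => cfA ω 0
  | 1 => cfA ω 1 * cfA ω 0 + 1
  | k + 2 => cfA ω (k + 2) * cfP ω (k + 1) + cfP ω k

/-- The denominators `q_k` of the convergents of `ω`. -/
noncomputable def cfQ (ω : ℝ) : ℕ → ℤ
  | 0 => 1
  | 1 => cfA ω 1
  | k + 2 => cfA ω (k + 2) * cfQ ω (k + 1) + cfQ ω k

/-- `ω` satisfies the Diophantine condition of order `ν`: there is `C > 0` with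
`|ω − p/q| ≥ C/q^(2+ν)` for all integers `p` and naturals `q ≥ 1`. -/
def DiophCond (ω ν : ℝ) : Prop :=
  ∃ C > 0, ∀ (q : ℕ) (p : ℤ), 0 < q → C / (q : ℝ) ^ (2 + ν) ≤ |ω - (p : ℝ) / (q : ℝ)|

/-- `ω` has the `G`-property: there is `C > 1` with `q_{k+1} ≥ C·q_k` for all `k ≥ 1`. -/
def GProperty (ω : ℝ) : Prop :=
  ∃ C > 1, ∀ k : ℕ, 1 ≤ k → C * (cfQ ω k : ℝ) ≤ (cfQ ω (k + 1) : ℝ)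


open Filter Set Topology

theorem exists_pos_abs_mul_sub_round_lt (θ : ℝ) {η : ℝ} (hη : 0 < η) :
    ∃ q : ℕ, 0 < q ∧ |q * θ - round (q * θ)| < η := by
  obtain ⟨n, hn⟩ := exists_nat_gt η⁻¹
  have hn0 : 0 < n := by exact_mod_cast (inv_pos.2 hη).trans hn
  obtain ⟨k, hk, -, hkθ⟩ := Real.exists_nat_abs_mul_sub_round_le θ hn0
  refine ⟨k, hk, hkθ.trans_lt ?_⟩
  rw [div_lt_iff₀ (by positivity)]
  nlinarith [mul_inv_cancel₀ hη.ne']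

theorem mul_le_one_of_forall_le_abs_mul_sub_round (θ : ℝ) {η : ℝ} (hη₁ : η ≤ 1) {Q : ℕ}
    (hQ : 0 < Q) (hmin : ∀ m : ℕ, 0 < m → m < Q → η ≤ |m * θ - round (m * θ)|) :
    (Q : ℝ) * η ≤ 1 := by
  rcases Nat.lt_or_ge Q 2 with hQ1 | hQ2
  · obtain rfl : Q = 1 := by omega
    simpa using hη₁
  obtain ⟨k, hk, hkQ, hkθ⟩ := Real.exists_nat_abs_mul_sub_round_le θ (n := Q - 1) (by omega)
  have hη' := (hmin k hk (by omega)).trans hkθ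
  rwa [Nat.cast_sub (by omega), Nat.cast_one, sub_add_cancel, le_div_iff₀ (by positivity),
    mul_comm] at hη'

noncomputable def firstReturnTime (θ η : ℝ) : ℕ :=
  sInf {q : ℕ | 0 < q ∧ |q * θ - round (q * θ)| < η}

section FirstReturnTime

variable {θ η : ℝ}

theorem firstReturnTime_spec (θ : ℝ) (hη : 0 < η) :
    0 < firstReturnTime θ η ∧
      |firstReturnTime θ η * θ - round (firstReturnTime θ η * θ)| < η :=
  Nat.sInf_mem (exists_pos_abs_mul_sub_round_lt θ hη)

theorem firstReturnTime_le {q : ℕ} (hq : 0 < q) (hqθ : |q * θ - round (q * θ)| < η) :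
    firstReturnTime θ η ≤ q :=
  Nat.sInf_le ⟨hq, hqθ⟩

theorem le_abs_mul_sub_round_of_lt_firstReturnTime {m : ℕ} (hm : 0 < m)
    (hlt : m < firstReturnTime θ η) : η ≤ |m * θ - round (m * θ)| := by
  by_contra! h
  exact (firstReturnTime_le hm h).not_gt hlt

theorem firstReturnTime_mul_le_one (θ : ℝ) (hη : 0 < η) (hη₁ : η ≤ 1) :
    (firstReturnTime θ η : ℝ) * η ≤ 1 :=
  mul_le_one_of_forall_le_abs_mul_sub_round θ hη₁ (firstReturnTime_spec θ hη).1
    fun _ hm hlt => le_abs_mul_sub_round_of_lt_firstReturnTime hm hlt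

theorem firstReturnTime_lt_firstReturnTime_abs (θ : ℝ) (hη : 0 < η)
    (hpos : 0 < |firstReturnTime θ η * θ - round (firstReturnTime θ η * θ)|) :
    firstReturnTime θ η <
      firstReturnTime θ |firstReturnTime θ η * θ - round (firstReturnTime θ η * θ)| := by
  obtain ⟨hq', hq'θ⟩ := firstReturnTime_spec θ hpos
  refine (firstReturnTime_le hq' (hq'θ.trans (firstReturnTime_spec θ hη).2)).lt_of_ne fun heq => ?_
  rw [← heq] at hq'θ
  exact hq'θ.false

end FirstReturnTime

theorem Irrational.abs_mul_sub_round_pos {θ : ℝ} (hθ : Irrational θ) {q : ℕ} (hq : 0 < q) :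
    0 < |q * θ - round (q * θ)| :=
  abs_pos.2 (sub_ne_zero.2 ((hθ.natCast_mul hq.ne').ne_int _))

/-- Consecutive best approximations lie on opposite sides of the integers: otherwise their
difference would be a better approximation with a smaller denominator. -/
theorem Irrational.mul_neg_of_lt_firstReturnTime {θ : ℝ} (hθ : Irrational θ) {q : ℕ}
    (hq : 0 < q) (hlt : q < firstReturnTime θ |q * θ - round (q * θ)|) :
    (q * θ - round (q * θ)) *
      (firstReturnTime θ |q * θ - round (q * θ)| * θ -
        round (firstReturnTime θ |q * θ - round (q * θ)| * θ)) < 0 := by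
  obtain ⟨q', hq'⟩ : ∃ q', firstReturnTime θ |q * θ - round (q * θ)| = q' := ⟨_, rfl⟩
  have hb := hθ.abs_mul_sub_round_pos hq
  obtain ⟨hq'0, hb'b⟩ := firstReturnTime_spec θ hb
  rw [hq'] at hlt hq'0 hb'b ⊢
  have hb' := hθ.abs_mul_sub_round_pos hq'0
  by_contra! hsame
  have hm := le_abs_mul_sub_round_of_lt_firstReturnTime (m := q' - q) (by omega)
    (by rw [hq']; omega)
  have hround : |((q' - q : ℕ) : ℝ) * θ - round (((q' - q : ℕ) : ℝ) * θ)| ≤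
      |(q' * θ - round (q' * θ : ℝ)) - (q * θ - round (q * θ : ℝ))| :=
    (round_le _ (round (q' * θ : ℝ) - round (q * θ : ℝ))).trans_eq <| by
      rw [Nat.cast_sub hlt.le]; push_cast; ring_nf
  generalize (q : ℝ) * θ - round (q * θ : ℝ) = b at *
  generalize (q' : ℝ) * θ - round (q' * θ : ℝ) = b' at *
  have := hm.trans hround
  rcases abs_cases b with ⟨h1, _⟩ | ⟨h1, _⟩ <;> rcases abs_cases b' with ⟨h2, _⟩ | ⟨h2, _⟩ <;>
    rcases abs_cases (b' - b) with ⟨h3, _⟩ | ⟨h3, _⟩ <;> nlinarith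

/-- From the orbit point of least fractional part, a step by `-q₁` or by `+q₂` stays in range
and would lower the fractional part further. -/
theorem exists_fract_add_mul_le (θ x : ℝ) {η : ℝ} {q₁ q₂ : ℕ} {p₁ p₂ : ℤ} (hq₁ : 0 < q₁)
    (h₁ : 0 < q₁ * θ - p₁) (h₁η : q₁ * θ - p₁ ≤ η) (h₂ : 0 < p₂ - q₂ * θ)
    (h₂η : p₂ - q₂ * θ ≤ η) :
    ∃ j < q₁ + q₂, Int.fract (x + j * θ) ≤ η := by
  obtain ⟨j₀, hj₀, hmin⟩ := (Finset.range (q₁ + q₂)).exists_min_image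
    (fun j : ℕ => Int.fract (x + j * θ)) ⟨0, Finset.mem_range.2 (by omega)⟩
  rw [Finset.mem_range] at hj₀
  refine ⟨j₀, hj₀, ?_⟩
  by_contra! hgt
  have hlt := Int.fract_lt_one (x + j₀ * θ)
  rcases lt_or_ge j₀ q₁ with hj | hj
  · have hstep : Int.fract (x + (j₀ + q₂ : ℕ) * θ) = Int.fract (x + j₀ * θ) - (p₂ - q₂ * θ) := by
      rw [Int.fract_eq_iff]
      refine ⟨by linarith, by linarith, ⌊x + j₀ * θ⌋ + p₂, ?_⟩
      push_cast
      rw [Int.fract]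
      ring
    have := hmin (j₀ + q₂) (Finset.mem_range.2 (by omega))
    linarith
  · have hstep : Int.fract (x + (j₀ - q₁ : ℕ) * θ) = Int.fract (x + j₀ * θ) - (q₁ * θ - p₁) := by
      rw [Int.fract_eq_iff]
      refine ⟨by linarith, by linarith, ⌊x + j₀ * θ⌋ - p₁, ?_⟩
      push_cast [Nat.cast_sub hj]
      rw [Int.fract]
      ring
    have := hmin (j₀ - q₁) (Finset.mem_range.2 (by omega))
    linarith

theorem diophCond_iff {θ ν : ℝ} :
    DiophCond θ ν ↔ ∃ C > 0, ∀ (q : ℕ) (p : ℤ), 0 < q → C / (q : ℝ) ^ (1 + ν) ≤ |q * θ - p| := by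
  refine exists_congr fun C => and_congr_right fun _ => forall_congr' fun q =>
    forall_congr' fun p => imp_congr_right fun hq => ?_
  have hq' : (0 : ℝ) < q := by exact_mod_cast hq
  rw [show (2 : ℝ) + ν = (1 + ν) + 1 by ring, Real.rpow_add_one hq'.ne', ← div_div,
    show θ - p / q = (q * θ - p) / q by field_simp, abs_div, abs_of_pos hq',
    div_le_div_iff_of_pos_right hq']

theorem DiophCond.le_abs_intCast_mul_sub {θ ν : ℝ} (hD : DiophCond θ ν) :
    ∃ C > 0, ∀ q p : ℤ, q ≠ 0 → C / |(q : ℝ)| ^ (1 + ν) ≤ |q * θ - p| := by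
  obtain ⟨C, hC, hCθ⟩ := diophCond_iff.1 hD
  refine ⟨C, hC, fun q p hq => ?_⟩
  rcases le_or_gt 0 q with h | h
  · have key := hCθ q.natAbs p (Int.natAbs_pos.2 hq)
    rw [Nat.cast_natAbs, Int.cast_abs] at key
    rwa [abs_of_nonneg (Int.cast_nonneg h)] at key ⊢
  · have key := hCθ q.natAbs (-p) (Int.natAbs_pos.2 hq)
    rw [Nat.cast_natAbs, Int.cast_abs, abs_of_neg (Int.cast_lt_zero.2 h), Int.cast_neg,
      ← abs_neg, show -(-(q : ℝ) * θ - -(p : ℝ)) = q * θ - p by ring] at key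
    rwa [abs_of_neg (Int.cast_lt_zero.2 h)]

theorem DiophCond.inv {θ ν : ℝ} (hθ : θ ≠ 0) (hν : 0 ≤ ν) (hD : DiophCond θ ν) :
    DiophCond θ⁻¹ ν := by
  obtain ⟨C, hC, hCθ⟩ := hD.le_abs_intCast_mul_sub
  have hθ' : 0 < |θ⁻¹| := abs_pos.2 (inv_ne_zero hθ)
  set M := |θ⁻¹| + 1
  set C' := min (min 1 |θ⁻¹|) (C * |θ⁻¹| / M ^ (1 + ν))
  have hC' : 0 < C' := by positivity
  refine diophCond_iff.2 ⟨C', hC', fun q p hq => ?_⟩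
  have hq' : (1 : ℝ) ≤ q := by exact_mod_cast hq
  have hC'q : C' / (q : ℝ) ^ (1 + ν) ≤ C' := div_le_self hC'.le (Real.one_le_rpow hq' (by linarith))
  rcases le_or_gt 1 |q * θ⁻¹ - p| with hfar | hnear
  · exact hC'q.trans (((min_le_left _ _).trans (min_le_left _ _)).trans hfar)
  rcases eq_or_ne p 0 with rfl | hp
  · calc C' / (q : ℝ) ^ (1 + ν) ≤ |θ⁻¹| := hC'q.trans ((min_le_left _ _).trans (min_le_right _ _))
      _ ≤ |q * θ⁻¹ - ((0 : ℤ) : ℝ)| := by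
        rw [Int.cast_zero, sub_zero, abs_mul, Nat.abs_cast]
        exact le_mul_of_one_le_left hθ'.le hq'
  -- a near approximation `p / q` of `θ⁻¹` yields the approximation `q / p` of `θ`, with `|p| ≲ q`
  have hp' : 0 < |(p : ℝ)| := abs_pos.2 (Int.cast_ne_zero.2 hp)
  have hpM : |(p : ℝ)| ≤ M * q := by
    have := abs_sub_abs_le_abs_sub (p : ℝ) (q * θ⁻¹)
    rw [abs_sub_comm, abs_mul, Nat.abs_cast] at this
    nlinarith
  have hsplit : |q * θ⁻¹ - p| = |θ⁻¹| * |p * θ - q| := by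
    rw [← abs_mul, ← abs_neg]
    congr 1
    field_simp
    ring
  calc C' / (q : ℝ) ^ (1 + ν) ≤ C * |θ⁻¹| / M ^ (1 + ν) / (q : ℝ) ^ (1 + ν) :=
        div_le_div_of_nonneg_right (min_le_right _ _) (by positivity)
    _ = |θ⁻¹| * (C / (M * q) ^ (1 + ν)) := by
        rw [Real.mul_rpow (by positivity) (by positivity)]
        field_simp
    _ ≤ |θ⁻¹| * (C / |(p : ℝ)| ^ (1 + ν)) := by gcongr
    _ ≤ |θ⁻¹| * |p * θ - q| := by gcongr; exact_mod_cast hCθ p q hp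
    _ = |q * θ⁻¹ - p| := hsplit.symm

theorem DiophCond.exists_two_sided_approx {θ ν : ℝ} (hθ : Irrational θ) (hν : 0 ≤ ν)
    (hD : DiophCond θ ν) :
    ∃ K > 0, ∀ δ, 0 < δ → δ ≤ 1 → ∃ q₁ q₂ : ℕ, ∃ p₁ p₂ : ℤ, 0 < q₁ ∧
      ((q₁ + q₂ : ℕ) : ℝ) ≤ K * (1 / δ) ^ (1 + ν) ∧
      0 < q₁ * θ - p₁ ∧ q₁ * θ - p₁ ≤ δ ∧ 0 < p₂ - q₂ * θ ∧ p₂ - q₂ * θ ≤ δ := by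
  obtain ⟨C, hC, hCθ⟩ := diophCond_iff.1 hD
  refine ⟨1 + C⁻¹, by positivity, fun δ hδ hδ₁ => ?_⟩
  obtain ⟨hq₁, hb₁δ⟩ := firstReturnTime_spec θ hδ
  have hb₁ := hθ.abs_mul_sub_round_pos hq₁
  have hsign := hθ.mul_neg_of_lt_firstReturnTime hq₁
    (firstReturnTime_lt_firstReturnTime_abs θ hδ hb₁)
  obtain ⟨hq₂, hb₂b₁⟩ := firstReturnTime_spec θ hb₁
  have hq₁δ := firstReturnTime_mul_le_one θ hδ hδ₁
  have hq₂b₁ := firstReturnTime_mul_le_one θ hb₁ (hb₁δ.le.trans hδ₁)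
  have hDC := hCθ _ (round (firstReturnTime θ δ * θ)) hq₁
  generalize firstReturnTime θ |firstReturnTime θ δ * θ - round (firstReturnTime θ δ * θ)| = q₂
    at hsign hq₂ hb₂b₁ hq₂b₁
  generalize firstReturnTime θ δ = q₁ at *
  -- the Diophantine condition keeps the next denominator `q₂ ≤ 1 / ‖q₁ θ‖` polynomial in `1 / δ`
  have hδ' : 1 ≤ 1 / δ := by rw [le_div_iff₀ hδ]; linarith
  have hq₁' : (q₁ : ℝ) ≤ 1 / δ := by rw [le_div_iff₀ hδ]; exact hq₁δ
  have hpow : (q₁ : ℝ) ^ (1 + ν) ≤ (1 / δ) ^ (1 + ν) :=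
    Real.rpow_le_rpow (Nat.cast_nonneg _) hq₁' (by linarith)
  have hq₂' : (q₂ : ℝ) ≤ C⁻¹ * (1 / δ) ^ (1 + ν) := by
    rw [div_le_iff₀ (by positivity)] at hDC
    rw [inv_mul_eq_div, le_div_iff₀ hC]
    nlinarith
  have hsize : ((q₁ + q₂ : ℕ) : ℝ) ≤ (1 + C⁻¹) * (1 / δ) ^ (1 + ν) := by
    push_cast
    nlinarith [Real.self_le_rpow_of_one_le hδ' (by linarith : 1 ≤ 1 + ν)]
  rcases lt_or_gt_of_ne (abs_pos.1 hb₁) with hneg | hpos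
  · refine ⟨q₂, q₁, round (q₂ * θ : ℝ), round (q₁ * θ : ℝ), hq₂, by rwa [add_comm], ?_⟩
    have hb₂ := pos_of_mul_neg_right hsign hneg.le
    rw [abs_of_neg hneg] at hb₁δ hb₂b₁
    rw [abs_of_pos hb₂] at hb₂b₁
    refine ⟨hb₂, ?_, ?_, ?_⟩ <;> linarith
  · refine ⟨q₁, q₂, round (q₁ * θ : ℝ), round (q₂ * θ : ℝ), hq₁, hsize, ?_⟩
    have hb₂ := neg_of_mul_neg_right hsign hpos.le
    rw [abs_of_pos hpos] at hb₁δ hb₂b₁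
    rw [abs_of_neg hb₂] at hb₂b₁
    refine ⟨hpos, ?_, ?_, ?_⟩ <;> linarith

theorem DiophCond.exists_mem_Icc_abs_mul_sub_round_le {θ ν : ℝ} (hθ : Irrational θ)
    (hν : 0 ≤ ν) (hD : DiophCond θ ν) :
    ∃ K > 0, ∀ δ, 0 < δ → δ ≤ 1 → ∀ a : ℝ, ∃ n : ℤ,
      (n : ℝ) ∈ Icc a (a + K * (1 / δ) ^ (1 + ν)) ∧ |n * θ - round (n * θ)| ≤ δ := by
  obtain ⟨K, hK, happrox⟩ := hD.exists_two_sided_approx hθ hν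
  refine ⟨K, hK, fun δ hδ hδ₁ a => ?_⟩
  obtain ⟨q₁, q₂, p₁, p₂, hq₁, hsize, h₁, h₁δ, h₂, h₂δ⟩ := happrox δ hδ hδ₁
  obtain ⟨j, hj, hfract⟩ := exists_fract_add_mul_le θ (⌈a⌉ * θ) hq₁ h₁ h₁δ h₂ h₂δ
  have hnθ : ((⌈a⌉ + j : ℤ) : ℝ) * θ = ⌈a⌉ * θ + j * θ := by push_cast; ring
  refine ⟨⌈a⌉ + j, ⟨?_, ?_⟩, ?_⟩
  · push_cast
    linarith [Int.le_ceil a, (Nat.cast_nonneg j : (0 : ℝ) ≤ j)]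
  · have hj' : (j : ℝ) + 1 ≤ ((q₁ + q₂ : ℕ) : ℝ) := by exact_mod_cast hj
    push_cast
    linarith [Int.ceil_lt_add_one a]
  · calc |((⌈a⌉ + j : ℤ) : ℝ) * θ - round (((⌈a⌉ + j : ℤ) : ℝ) * θ)|
        ≤ |((⌈a⌉ + j : ℤ) : ℝ) * θ - ⌊((⌈a⌉ + j : ℤ) : ℝ) * θ⌋| := round_le _ _
      _ = Int.fract (⌈a⌉ * θ + j * θ) := by
        rw [← Int.fract, abs_of_nonneg (Int.fract_nonneg _), hnθ]
      _ ≤ δ := hfract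

/-- When the quotient is unbounded below, the `limsup` in `ℝ` takes its junk value `0`. -/
theorem limsup_log_div_log_one_div_le {f : ℝ → ℝ} {K e : ℝ} (hf : ∀ ε, 0 ≤ f ε) (hK : 0 < K)
    (he : 0 ≤ e) (hbound : ∀ᶠ ε in 𝓝[>] 0, f ε ≤ K * (1 / ε) ^ e) :
    limsup (fun ε => Real.log (f ε) / Real.log (1 / ε)) (𝓝[>] 0) ≤ e := by
  by_cases hcob : IsCoboundedUnder (· ≤ ·) (𝓝[>] 0)
      (fun ε => Real.log (f ε) / Real.log (1 / ε))
  swap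
  · rw [Real.limsup_of_not_isCoboundedUnder hcob]
    exact he
  refine le_of_forall_gt_imp_ge_of_dense fun b hb => limsup_le_of_le hcob ?_
  have hlog : Tendsto (fun ε => Real.log (1 / ε)) (𝓝[>] 0) atTop := by
    simpa only [one_div, Real.log_inv, Function.comp_def] using
      tendsto_neg_atBot_atTop.comp Real.tendsto_log_nhdsGT_zero
  filter_upwards [hbound, hlog.eventually_gt_atTop 0,
    hlog.eventually_ge_atTop (Real.log K / (b - e)), self_mem_nhdsWithin]
    with ε hfε hpos hbig hε
  rw [div_le_iff₀ hpos]
  rcases le_or_gt (f ε) 1 with hf₁ | hf₁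
  · nlinarith [Real.log_nonpos (hf ε) hf₁]
  have hε' : (0 : ℝ) < 1 / ε := one_div_pos.2 hε
  have hlogf : Real.log (f ε) ≤ Real.log K + e * Real.log (1 / ε) := by
    rw [← Real.log_rpow hε', ← Real.log_mul hK.ne' (by positivity)]
    exact Real.log_le_log (by linarith) hfε
  rw [div_le_iff₀' (by linarith)] at hbig
  linarith

theorem Function.Periodic.add_intCast_eq {α : Type*} {f : ℝ → α} (hf : Function.Periodic f 1)
    (m : ℤ) (t : ℝ) : f (t + m) = f t := by
  simpa using hf.int_mul m t

section Quasiperiodic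

variable {E : Type*} [NormedAddCommGroup E] {θ : ℝ} {h : ℝ → ℝ → E} {u : ℝ → E}

theorem isAlmostPeriod_intCast_of_abs_mul_sub_le (hper1 : ∀ t s, h (t + 1) s = h t s)
    (hper2 : ∀ t s, h t (s + 1) = h t s) {Ch ε₀ α : ℝ} (hCh : 0 < Ch) (hα : 0 < α)
    (hH : ∀ t₁ t₂ s, |t₁ - t₂| ≤ ε₀ → ‖h t₁ s - h t₂ s‖ ≤ Ch * |t₁ - t₂| ^ α)
    (hu : ∀ t, u t = h (θ * t) t) {n m : ℤ} {δ : ℝ} (hnm : |n * θ - m| ≤ δ) (hδ : δ ≤ ε₀) :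
    IsAlmostPeriod u (Ch * δ ^ α) n := by
  intro t
  have hshift : u (t + n) = h (θ * t + (n * θ - m)) t := by
    rw [hu, Function.Periodic.add_intCast_eq (hper2 _),
      show θ * (t + n) = θ * t + (n * θ - m) + m by ring,
      Function.Periodic.add_intCast_eq (f := (h · t)) (hper1 · t)]
  rw [hshift, hu]
  refine (hH _ _ t ?_).trans ?_ <;> rw [add_sub_cancel_left]
  · exact hnm.trans hδ
  · gcongr

def HasInclusionLengthBound (u : ℝ → E) (e : ℝ) : Prop :=
  ∃ K > 0, ∃ ε₁ > 0, ∀ ε : ℝ, 0 < ε → ε < ε₁ → IsInclusionLength u ε (K * (1 / ε) ^ e)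

theorem hasInclusionLengthBound_of_diophCond (hθ : Irrational θ) {ν : ℝ} (hν : 0 ≤ ν)
    (hD : DiophCond θ ν) (hper1 : ∀ t s, h (t + 1) s = h t s)
    (hper2 : ∀ t s, h t (s + 1) = h t s) {Ch ε₀ α : ℝ} (hCh : 0 < Ch) (hε₀ : 0 < ε₀)
    (hα : 0 < α) (hH : ∀ t₁ t₂ s, |t₁ - t₂| ≤ ε₀ → ‖h t₁ s - h t₂ s‖ ≤ Ch * |t₁ - t₂| ^ α)
    (hu : ∀ t, u t = h (θ * t) t) :
    HasInclusionLengthBound u ((1 + ν) / α) := by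
  obtain ⟨K, hK, hwindow⟩ := hD.exists_mem_Icc_abs_mul_sub_round_le hθ hν
  set δ₀ := min ε₀ 1
  have hδ₀ : 0 < δ₀ := lt_min hε₀ one_pos
  refine ⟨K * Ch ^ ((1 + ν) / α), by positivity, Ch * δ₀ ^ α, by positivity,
    fun ε hε hε₁ => ?_⟩
  set δ := (ε / Ch) ^ α⁻¹
  have hδ : 0 < δ := by positivity
  have hδδ₀ : δ ≤ δ₀ := calc
    δ ≤ (δ₀ ^ α) ^ α⁻¹ :=
      Real.rpow_le_rpow (by positivity) ((div_le_iff₀' hCh).2 hε₁.le) (by positivity)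
    _ = δ₀ := Real.rpow_rpow_inv hδ₀.le hα.ne'
  have hεδ : Ch * δ ^ α = ε := by
    rw [Real.rpow_inv_rpow (by positivity) hα.ne', mul_div_cancel₀ _ hCh.ne']
  have hlength : K * Ch ^ ((1 + ν) / α) * (1 / ε) ^ ((1 + ν) / α) = K * (1 / δ) ^ (1 + ν) := by
    have hδinv : 1 / δ = (Ch * (1 / ε)) ^ α⁻¹ := by
      rw [one_div, ← Real.inv_rpow (by positivity), inv_div, mul_one_div]
    rw [hδinv, ← Real.rpow_mul (by positivity), inv_mul_eq_div,
      Real.mul_rpow hCh.le (by positivity), mul_assoc]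
  rw [hlength]
  refine ⟨by positivity, fun a => ?_⟩
  obtain ⟨n, hn, hnθ⟩ := hwindow δ hδ (hδδ₀.trans (min_le_right _ _)) a
  refine ⟨n, hn, ?_⟩
  rw [← hεδ]
  exact isAlmostPeriod_intCast_of_abs_mul_sub_le hper1 hper2 hCh hα hH hu hnθ
    (hδδ₀.trans (min_le_left _ _))

theorem IsAlmostPeriod.of_comp_mul {c ε τ : ℝ} (hc : c ≠ 0)
    (hτ : IsAlmostPeriod (fun s => u (c * s)) ε τ) : IsAlmostPeriod u ε (c * τ) := fun t => by
  simpa only [mul_add, mul_div_cancel₀ t hc] using hτ (t / c)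

theorem IsInclusionLength.of_comp_mul {c ε L : ℝ} (hc : c ≠ 0)
    (hL : IsInclusionLength (fun s => u (c * s)) ε L) : IsInclusionLength u ε (|c| * L) := by
  refine ⟨mul_pos (abs_pos.2 hc) hL.1, fun a => ?_⟩
  have hca : c * (a / c) = a := mul_div_cancel₀ a hc
  rcases hc.lt_or_gt with hneg | hpos
  · obtain ⟨σ, ⟨hσ₁, hσ₂⟩, hσ⟩ := hL.2 (a / c - L)
    rw [abs_of_neg hneg]
    refine ⟨c * σ, ⟨?_, ?_⟩, hσ.of_comp_mul hc⟩ <;> nlinarith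
  · obtain ⟨σ, ⟨hσ₁, hσ₂⟩, hσ⟩ := hL.2 (a / c)
    rw [abs_of_pos hpos]
    refine ⟨c * σ, ⟨?_, ?_⟩, hσ.of_comp_mul hc⟩ <;> nlinarith

theorem HasInclusionLengthBound.of_comp_mul {c e : ℝ} (hc : c ≠ 0)
    (hu : HasInclusionLengthBound (fun s => u (c * s)) e) : HasInclusionLengthBound u e := by
  obtain ⟨K, hK, ε₁, hε₁, hL⟩ := hu
  refine ⟨|c| * K, mul_pos (abs_pos.2 hc) hK, ε₁, hε₁, fun ε hε hεε₁ => ?_⟩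
  rw [mul_assoc]
  exact (hL ε hε hεε₁).of_comp_mul hc

theorem inclusionLength_nonneg (u : ℝ → E) (ε : ℝ) : 0 ≤ inclusionLength u ε :=
  Real.sInf_nonneg fun _ hL => hL.1.le

theorem IsInclusionLength.inclusionLength_le {ε L : ℝ} (hL : IsInclusionLength u ε L) :
    inclusionLength u ε ≤ L :=
  csInf_le ⟨0, fun _ hL' => hL'.1.le⟩ hL

theorem HasInclusionLengthBound.inclusionLength_le {e : ℝ} (hu : HasInclusionLengthBound u e) :
    ∃ K > 0, ∃ ε₁ > 0, ∀ ε : ℝ, 0 < ε → ε < ε₁ → inclusionLength u ε ≤ K * (1 / ε) ^ e := by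
  obtain ⟨K, hK, ε₁, hε₁, hL⟩ := hu
  exact ⟨K, hK, ε₁, hε₁, fun ε hε hεε₁ => (hL ε hε hεε₁).inclusionLength_le⟩

theorem HasInclusionLengthBound.diophDim_le {e : ℝ} (hu : HasInclusionLengthBound u e)
    (he : 0 ≤ e) : diophDim u ≤ e := by
  obtain ⟨K, hK, ε₁, hε₁, hbound⟩ := hu.inclusionLength_le
  refine limsup_log_div_log_one_div_le (inclusionLength_nonneg u) hK he ?_
  filter_upwards [Ioo_mem_nhdsGT hε₁] with ε hε using hbound ε hε.1 hε.2

end Quasiperiodic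

theorem diophDim_quasiperiodic_upper_general {E : Type*} [NormedAddCommGroup E]
    (ω : ℝ) (hω : Irrational ω) (ν : ℝ) (hν : 0 ≤ ν)
    (hD : DiophCond ω ν)
    (h : ℝ → ℝ → E)
    (hper1 : ∀ t s : ℝ, h (t + 1) s = h t s) (hper2 : ∀ t s : ℝ, h t (s + 1) = h t s)
    (Ch ε₀ α₁ α₂ : ℝ) (hCh : 0 < Ch) (hε₀ : 0 < ε₀)
    (hα₁ : α₁ ∈ Set.Ioc (0 : ℝ) 1) (hα₂ : α₂ ∈ Set.Ioc (0 : ℝ) 1)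
    (hH1 : ∀ t₁ t₂ s : ℝ, |t₁ - t₂| ≤ ε₀ → ‖h t₁ s - h t₂ s‖ ≤ Ch * |t₁ - t₂| ^ α₁)
    (hH2 : ∀ t s₁ s₂ : ℝ, |s₁ - s₂| ≤ ε₀ → ‖h t s₁ - h t s₂‖ ≤ Ch * |s₁ - s₂| ^ α₂)
    (u : ℝ → E) (hu : ∀ t : ℝ, u t = h (ω * t) t) :
    (∃ K > 0, ∃ ε₁ > 0, ∀ ε : ℝ, 0 < ε → ε < ε₁ →
        inclusionLength u ε ≤ K * (1 / ε) ^ ((1 + ν) / max α₁ α₂)) ∧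
      diophDim u ≤ (1 + ν) / max α₁ α₂ := by
  have hbound : HasInclusionLengthBound u ((1 + ν) / max α₁ α₂) := by
    rcases le_total α₂ α₁ with hα | hα
    · rw [max_eq_left hα]
      exact hasInclusionLengthBound_of_diophCond hω hν hD hper1 hper2 hCh hε₀ hα₁.1 hH1 hu
    -- with the roles of the two variables exchanged, `s ↦ u (ω⁻¹ * s)` has frequency `ω⁻¹`
    rw [max_eq_right hα]
    refine HasInclusionLengthBound.of_comp_mul (inv_ne_zero hω.ne_zero) ?_
    exact hasInclusionLengthBound_of_diophCond (h := fun s t => h t s) hω.inv hν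
      (hD.inv hω.ne_zero hν) (fun t s => hper2 s t) (fun t s => hper1 s t) hCh hε₀ hα₂.1
      (fun s₁ s₂ t => hH2 t s₁ s₂)
      fun s => by simp only [hu, mul_inv_cancel_left₀ hω.ne_zero]
  exact ⟨hbound.inclusionLength_le,
    hbound.diophDim_le (div_nonneg (by linarith) (le_max_of_le_left hα₁.1.le))⟩

/-- If `ω` is irrational with the `G`-property and the Diophantine condition of order `ν`,
and `u(t) = h(ωt, t)` with `h` 1-periodic in each variable and locally Hölder with
exponents `α₁, α₂` in the two variables, then with `α = max{α₁, α₂}` there is `K > 0` so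
that `l_u(ε) ≤ K(1/ε)^{(1+ν)/α}` for all small `ε > 0`; in particular
`𝔇𝔦(u) ≤ (1+ν)/α`. -/
theorem diophDim_quasiperiodic_upper {E : Type*} [NormedAddCommGroup E]
    (ω : ℝ) (hω : Irrational ω) (ν : ℝ) (hν : 0 ≤ ν)
    (hG : GProperty ω) (hD : DiophCond ω ν)
    (h : ℝ → ℝ → E) (hcont : Continuous fun p : ℝ × ℝ => h p.1 p.2)
    (hper1 : ∀ t s : ℝ, h (t + 1) s = h t s) (hper2 : ∀ t s : ℝ, h t (s + 1) = h t s)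
    (Ch ε₀ α₁ α₂ : ℝ) (hCh : 0 < Ch) (hε₀ : 0 < ε₀)
    (hα₁ : α₁ ∈ Set.Ioc (0 : ℝ) 1) (hα₂ : α₂ ∈ Set.Ioc (0 : ℝ) 1)
    (hH1 : ∀ t₁ t₂ s : ℝ, |t₁ - t₂| ≤ ε₀ → ‖h t₁ s - h t₂ s‖ ≤ Ch * |t₁ - t₂| ^ α₁)
    (hH2 : ∀ t s₁ s₂ : ℝ, |s₁ - s₂| ≤ ε₀ → ‖h t s₁ - h t s₂‖ ≤ Ch * |s₁ - s₂| ^ α₂)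
    (u : ℝ → E) (hu : ∀ t : ℝ, u t = h (ω * t) t) :
    (∃ K > 0, ∃ ε₁ > 0, ∀ ε : ℝ, 0 < ε → ε < ε₁ →
        inclusionLength u ε ≤ K * (1 / ε) ^ ((1 + ν) / max α₁ α₂)) ∧
      diophDim u ≤ (1 + ν) / max α₁ α₂ :=
  diophDim_quasiperiodic_upper_general ω hω ν hν hD h hper1 hper2 Ch ε₀ α₁ α₂ hCh hε₀ hα₁ hα₂ hH1
    hH2 u hu
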